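/- Let N ≥ 1, let a_1, …, a_N be real numbers with mean ā = (1/N)·Σᵢ aᵢ such that Δ = Σᵢ (a_i − ā)² > 0, let c ∈ ℝ, and let ρ0 ∈ ℝ with 0 < ρ0 < 1/3. For p, q ∈ {1, …, N} define M_i(p, q) = (1 − ρ0)·a_i + 2ρ0·a_q − ρ0·a_p + c. Then Σ_{i=1}^{N} (1/N²)·Σ_{p=1}^{N} Σ_{q=1}^{N} ( M_i(p, q) − (ā + c) )² < Σ_{i=1}^{N} (a_i − ā)². -/

import Mathlib

/-!
Write `bᵢ = aᵢ - ā`, so that `Σ bᵢ = 0` and `Δ = Σ bᵢ²`. Since the coefficients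
`1 - ρ0`, `2ρ0`, `-ρ0` sum to `1`, the deviation `M_i(p, q) - (ā + c)` equals
`(1 - ρ0) bᵢ - ρ0 b_p + 2ρ0 b_q`. Averaging its square over independent uniform `p`, `q`
kills the cross terms, and summing over `i` gives `((1 - ρ0)² + ρ0² + 4ρ0²) Δ
= (1 - 2ρ0 + 6ρ0²) Δ`, which is `< Δ` exactly when `0 < ρ0 < 1/3`.
-/

open Finset

section Centered

variable {ι : Type*} [Fintype ι]

theorem sum_sub_mean_eq_zero (a : ι → ℝ) :
    ∑ i, (a i - (1 / (Fintype.card ι : ℝ)) * ∑ j, a j) = 0 := by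
  rcases isEmpty_or_nonempty ι with hι | hι
  · simp
  · have hcard : (Fintype.card ι : ℝ) ≠ 0 := by positivity
    rw [sum_sub_distrib, sum_const, card_univ, nsmul_eq_mul]
    field_simp
    ring

variable {b : ι → ℝ}

theorem sum_add_mul_sq_of_sum_eq_zero (hb : ∑ i, b i = 0) (u y : ℝ) :
    ∑ i, (u + y * b i) ^ 2 = Fintype.card ι * u ^ 2 + y ^ 2 * ∑ i, b i ^ 2 := by
  have expand : ∀ i, (u + y * b i) ^ 2 = u ^ 2 + 2 * u * y * b i + y ^ 2 * b i ^ 2 :=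
    fun i => by ring
  simp only [expand, sum_add_distrib, ← mul_sum, hb, sum_const, card_univ, nsmul_eq_mul]
  ring

theorem sum_sum_add_mul_add_mul_sq_of_sum_eq_zero (hb : ∑ i, b i = 0) (u y z : ℝ) :
    ∑ p, ∑ q, (u + z * b p + y * b q) ^ 2
      = (Fintype.card ι : ℝ) ^ 2 * u ^ 2
        + Fintype.card ι * (y ^ 2 + z ^ 2) * ∑ i, b i ^ 2 := by
  simp only [sum_add_mul_sq_of_sum_eq_zero hb, sum_add_distrib, ← mul_sum, sum_const,
    card_univ, nsmul_eq_mul]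
  ring

end Centered

theorem sum_multiStep_dispersion_eq {ι : Type*} [Fintype ι] (a : ι → ℝ) (c ρ : ℝ) :
    let abar := (1 / (Fintype.card ι : ℝ)) * ∑ i, a i
    ∑ i, (1 / (Fintype.card ι : ℝ) ^ 2) *
        ∑ p, ∑ q, (((1 - ρ) * a i + 2 * ρ * a q - ρ * a p + c) - (abar + c)) ^ 2
      = (1 - 2 * ρ + 6 * ρ ^ 2) * ∑ i, (a i - abar) ^ 2 := by
  intro abar
  rcases isEmpty_or_nonempty ι with hι | hι
  · simp
  have hcard : (Fintype.card ι : ℝ) ≠ 0 := by positivity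
  set b := fun i => a i - abar
  have hb : ∑ i, b i = 0 := sum_sub_mean_eq_zero a
  have deviation : ∀ i p q, ((1 - ρ) * a i + 2 * ρ * a q - ρ * a p + c) - (abar + c)
      = (1 - ρ) * b i + (-ρ) * b p + (2 * ρ) * b q := fun i p q => by simp only [b]; ring
  change _ = _ * ∑ i, b i ^ 2
  simp only [deviation, sum_sum_add_mul_add_mul_sq_of_sum_eq_zero hb, mul_add, mul_pow,
    sum_add_distrib, sum_const, card_univ, nsmul_eq_mul, ← mul_sum]
  field_simp
  ring

theorem multi_step_reduces_dispersion_general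
    (N : ℕ) (a : Fin N → ℝ) (c ρ0 : ℝ)
    (hρ0 : 0 < ρ0) (hρ0' : ρ0 < 1 / 3)
    (abar : ℝ) (habar : abar = (1 / (N : ℝ)) * ∑ i : Fin N, a i)
    (hΔpos : 0 < ∑ i : Fin N, (a i - abar) ^ 2) :
    ∑ i : Fin N, (1 / (N : ℝ) ^ 2) *
        ∑ p : Fin N, ∑ q : Fin N,
          (((1 - ρ0) * a i + 2 * ρ0 * a q - ρ0 * a p + c) - (abar + c)) ^ 2
      < ∑ i : Fin N, (a i - abar) ^ 2 := by
  have hdispersion := sum_multiStep_dispersion_eq a c ρ0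
  simp only [Fintype.card_fin, ← habar] at hdispersion
  rw [hdispersion]
  have hfactor : 1 - 2 * ρ0 + 6 * ρ0 ^ 2 < 1 := by nlinarith
  exact mul_lt_of_lt_one_left hΔpos hfactor

/-- Proposition 2, part 2: for `0 < ρ0 < 1/3`, the expected dispersion of the
multi-step updated base policies around the updated ensemble is strictly smaller
than the single-step dispersion `Σᵢ (aᵢ − ā)²`. -/
theorem multi_step_reduces_dispersion
    (N : ℕ) (hN : 1 ≤ N) (a : Fin N → ℝ) (c ρ0 : ℝ)
    (hρ0 : 0 < ρ0) (hρ0' : ρ0 < 1 / 3)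
    (abar : ℝ) (habar : abar = (1 / (N : ℝ)) * ∑ i : Fin N, a i)
    (hΔpos : 0 < ∑ i : Fin N, (a i - abar) ^ 2) :
    ∑ i : Fin N, (1 / (N : ℝ) ^ 2) *
        ∑ p : Fin N, ∑ q : Fin N,
          (((1 - ρ0) * a i + 2 * ρ0 * a q - ρ0 * a p + c) - (abar + c)) ^ 2
      < ∑ i : Fin N, (a i - abar) ^ 2 :=
  multi_step_reduces_dispersion_general N a c ρ0 hρ0 hρ0' abar habar hΔpos
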